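/- Let λ > 0, c > 0, t > 0, and define p(u,t) = (e^{−λt}/c) [ −λ F(u,t) + (∂F/∂t)(u,t) + (2/λ)(∂²F/∂t²)(u,t) ], where F(u,t) = ∑_{k=0}^∞ (λ/(2c))^{2k} (c²t² − u²)^k / (k!)². Then p(u,t) ≥ 0 for all u with 0 ≤ u < ct. -/

import Mathlib

/-- `F(u,t) = ∑_{k=0}^∞ (λ/(2c))^{2k} (c²t² − u²)^k / (k!)²`,
which equals `I₀((λ/c)√(c²t² − u²))` for `|u| ≤ ct`. -/
noncomputable def F (lam c u t : ℝ) : ℝ :=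
  ∑' k : ℕ, (lam / (2 * c)) ^ (2 * k) * (c ^ 2 * t ^ 2 - u ^ 2) ^ k /
    ((Nat.factorial k : ℝ)) ^ 2

/-- The density of the absolutely continuous component of the planar cyclic motion:
`p(u,t) = (e^{−λt}/c)[−λF + ∂F/∂t + (2/λ)∂²F/∂t²]`. -/
noncomputable def planarDensity (lam c u t : ℝ) : ℝ :=
  Real.exp (-(lam * t)) / c *
    (-(lam * F lam c u t) + deriv (fun s => F lam c u s) t +
      2 / lam * iteratedDeriv 2 (fun s => F lam c u s) t)

/-! With `q = (λ/(2c))²` and `A(s) = c²s² − u²` we have `F(u,·) = G ∘ A`, where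
`G(x) = ∑ qᵏ xᵏ / (k!)²` satisfies Bessel's equation `x G'' + G' = q G`. Eliminating `G` with it
turns the bracket in `p` into `2c²t G'(A) + (4c²/λ)(c²t² + u²) G''(A)`, and `G'`, `G''` have
nonnegative coefficients, hence are nonnegative at `A(t) ≥ 0`. -/

open scoped Nat

noncomputable section

def powSeriesSum (a : ℕ → ℝ) (x : ℝ) : ℝ := ∑' k, a k * x ^ k

def derivCoeff (a : ℕ → ℝ) (k : ℕ) : ℝ := (k + 1) * a (k + 1)

section
variable {a : ℕ → ℝ}

lemma summable_derivCoeff_mul_pow (ha : ∀ r, Summable fun k => a k * r ^ k) (r : ℝ) :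
    Summable fun k => derivCoeff a k * r ^ k := by
  set R := 2 * (|r| + 1)
  have hdom : Summable fun k => |a (k + 1) * R ^ (k + 1)| :=
    (summable_nat_add_iff 1).mpr (ha R).abs
  refine .of_norm_bounded hdom fun k => ?_
  have hk : (k + 1 : ℝ) ≤ 2 ^ (k + 1) := by exact_mod_cast (Nat.lt_two_pow_self).le
  have hr : |r| ^ k ≤ (|r| + 1) ^ (k + 1) :=
    (pow_le_pow_left₀ (abs_nonneg r) (by linarith) k).trans
      (pow_le_pow_right₀ (by linarith [abs_nonneg r]) k.le_succ)
  rw [Real.norm_eq_abs, derivCoeff, abs_mul, abs_mul, abs_mul, abs_pow, abs_pow,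
    abs_of_pos (by positivity : (0 : ℝ) < k + 1), abs_of_pos (by positivity : 0 < R), mul_pow]
  calc (k + 1 : ℝ) * |a (k + 1)| * |r| ^ k
        ≤ 2 ^ (k + 1) * |a (k + 1)| * (|r| + 1) ^ (k + 1) := by gcongr
    _ = |a (k + 1)| * (2 ^ (k + 1) * (|r| + 1) ^ (k + 1)) := by ring

lemma hasDerivAt_powSeriesSum (ha : ∀ r, Summable fun k => a k * r ^ k) (x : ℝ) :
    HasDerivAt (powSeriesSum a) (powSeriesSum (derivCoeff a) x) x := by
  set R := |x| + 1
  have hu : Summable fun k => |k * a k| * R ^ (k - 1) := by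
    refine (summable_nat_add_iff 1).mp ((summable_derivCoeff_mul_pow ha R).abs.congr fun k => ?_)
    rw [abs_mul, abs_of_pos (by positivity : 0 < R ^ k), derivCoeff]
    push_cast
    rfl
  have hbound : ∀ k y, y ∈ Set.Ioo (-R) R →
      ‖a k * (k * y ^ (k - 1))‖ ≤ |k * a k| * R ^ (k - 1) := by
    intro k y hy
    rw [show a k * (k * y ^ (k - 1)) = (k * a k) * y ^ (k - 1) by ring, norm_mul, norm_pow,
      Real.norm_eq_abs, Real.norm_eq_abs]
    gcongr
    exact abs_le.mpr ⟨hy.1.le, hy.2.le⟩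
  have hx : x ∈ Set.Ioo (-R) R := abs_lt.mp (lt_add_one |x|)
  have h := hasDerivAt_tsum_of_isPreconnected hu isOpen_Ioo isPreconnected_Ioo
    (fun k y _ => (hasDerivAt_pow k y).const_mul (a k)) hbound hx (ha x) hx
  refine h.congr_deriv ?_
  rw [tsum_eq_zero_add']
  · simp [powSeriesSum, derivCoeff, mul_comm, mul_left_comm]
  · refine (summable_derivCoeff_mul_pow ha x).congr fun k => ?_
    simp only [derivCoeff, Nat.cast_add, Nat.cast_one, add_tsub_cancel_right]
    ring

lemma summable_natCast_mul_mul_pow (ha : ∀ r, Summable fun k => a k * r ^ k) (x : ℝ) :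
    Summable fun k => k * a k * x ^ k := by
  refine (summable_nat_add_iff 1).mp
    (((summable_derivCoeff_mul_pow ha x).mul_left x).congr fun k => ?_)
  simp only [derivCoeff]
  push_cast
  ring

lemma mul_powSeriesSum_derivCoeff (ha : ∀ r, Summable fun k => a k * r ^ k) (x : ℝ) :
    x * powSeriesSum (derivCoeff a) x = ∑' k, k * a k * x ^ k := by
  rw [(summable_natCast_mul_mul_pow ha x).tsum_eq_zero_add, powSeriesSum, ← tsum_mul_left]
  simp only [CharP.cast_eq_zero, zero_mul, zero_add, derivCoeff]
  push_cast
  exact tsum_congr fun k => by ring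

lemma powSeriesSum_nonneg (ha : ∀ k, 0 ≤ a k) {x : ℝ} (hx : 0 ≤ x) : 0 ≤ powSeriesSum a x :=
  tsum_nonneg fun k => mul_nonneg (ha k) (pow_nonneg hx k)

lemma derivCoeff_nonneg (ha : ∀ k, 0 ≤ a k) (k : ℕ) : 0 ≤ derivCoeff a k :=
  mul_nonneg (by positivity) (ha _)

lemma hasDerivAt_powSeriesSum_comp_sq (ha : ∀ r, Summable fun k => a k * r ^ k) (c u s : ℝ) :
    HasDerivAt (fun s => powSeriesSum a (c ^ 2 * s ^ 2 - u ^ 2))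
      (powSeriesSum (derivCoeff a) (c ^ 2 * s ^ 2 - u ^ 2) * (2 * c ^ 2 * s)) s := by
  have hA : HasDerivAt (fun s : ℝ => c ^ 2 * s ^ 2 - u ^ 2) (2 * c ^ 2 * s) s := by
    simpa [mul_comm, mul_left_comm] using ((hasDerivAt_pow 2 s).const_mul (c ^ 2)).sub_const (u ^ 2)
  exact (hasDerivAt_powSeriesSum ha _).comp s hA

lemma iteratedDeriv_two_powSeriesSum_comp_sq (ha : ∀ r, Summable fun k => a k * r ^ k)
    (c u s : ℝ) :
    iteratedDeriv 2 (fun s => powSeriesSum a (c ^ 2 * s ^ 2 - u ^ 2)) s =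
      powSeriesSum (derivCoeff (derivCoeff a)) (c ^ 2 * s ^ 2 - u ^ 2) * (2 * c ^ 2 * s) ^ 2
        + powSeriesSum (derivCoeff a) (c ^ 2 * s ^ 2 - u ^ 2) * (2 * c ^ 2) := by
  have hd : deriv (fun s => powSeriesSum a (c ^ 2 * s ^ 2 - u ^ 2)) =
      fun s => powSeriesSum (derivCoeff a) (c ^ 2 * s ^ 2 - u ^ 2) * (2 * c ^ 2 * s) :=
    funext fun s => (hasDerivAt_powSeriesSum_comp_sq ha c u s).deriv
  rw [iteratedDeriv_succ, iteratedDeriv_one, hd]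
  have h := (hasDerivAt_powSeriesSum_comp_sq (summable_derivCoeff_mul_pow ha) c u s).fun_mul
    ((hasDerivAt_id' s).const_mul (2 * c ^ 2))
  rw [h.deriv]
  ring

end

def besselCoeff (q : ℝ) (k : ℕ) : ℝ := q ^ k / (k ! : ℝ) ^ 2

lemma summable_besselCoeff_mul_pow (q r : ℝ) : Summable fun k => besselCoeff q k * r ^ k := by
  refine .of_norm_bounded (Real.summable_pow_div_factorial |q * r|) fun k => ?_
  have hk : (1 : ℝ) ≤ k ! := by exact_mod_cast k.factorial_pos
  rw [besselCoeff, Real.norm_eq_abs, div_mul_eq_mul_div, ← mul_pow, abs_div, abs_pow, abs_pow,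
    abs_of_pos (by positivity : (0 : ℝ) < k !)]
  exact div_le_div_of_nonneg_left (by positivity) (by positivity) (le_self_pow₀ hk two_ne_zero)

lemma succ_mul_derivCoeff_besselCoeff (q : ℝ) (k : ℕ) :
    (k + 1) * derivCoeff (besselCoeff q) k = q * besselCoeff q k := by
  have hk : (k ! : ℝ) ≠ 0 := by positivity
  simp only [derivCoeff, besselCoeff, Nat.factorial_succ]
  push_cast
  field_simp
  ring

/-- Bessel's equation for `x ↦ I₀(2√(q x))`. -/
lemma powSeriesSum_besselCoeff_ode (q x : ℝ) :
    x * powSeriesSum (derivCoeff (derivCoeff (besselCoeff q))) x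
      + powSeriesSum (derivCoeff (besselCoeff q)) x = q * powSeriesSum (besselCoeff q) x := by
  have hb := summable_derivCoeff_mul_pow (summable_besselCoeff_mul_pow q)
  rw [mul_powSeriesSum_derivCoeff hb, powSeriesSum, powSeriesSum, ← tsum_mul_left,
    ← (summable_natCast_mul_mul_pow hb x).tsum_add (hb x)]
  refine tsum_congr fun k => ?_
  rw [← mul_assoc, ← succ_mul_derivCoeff_besselCoeff]
  ring

lemma F_eq_powSeriesSum (lam c u s : ℝ) :
    F lam c u s = powSeriesSum (besselCoeff ((lam / (2 * c)) ^ 2)) (c ^ 2 * s ^ 2 - u ^ 2) :=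
  tsum_congr fun k => by rw [besselCoeff, pow_mul]; ring

lemma planarDensity_eq_powSeriesSum {lam c : ℝ} (hlam : lam ≠ 0) (hc : c ≠ 0) (u t : ℝ) :
    planarDensity lam c u t = Real.exp (-(lam * t)) / c *
      (2 * c ^ 2 * t * powSeriesSum (derivCoeff (besselCoeff ((lam / (2 * c)) ^ 2)))
          (c ^ 2 * t ^ 2 - u ^ 2)
        + 4 * c ^ 2 / lam * (c ^ 2 * t ^ 2 + u ^ 2) *
          powSeriesSum (derivCoeff (derivCoeff (besselCoeff ((lam / (2 * c)) ^ 2))))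
            (c ^ 2 * t ^ 2 - u ^ 2)) := by
  have hsum := summable_besselCoeff_mul_pow ((lam / (2 * c)) ^ 2)
  have hode := powSeriesSum_besselCoeff_ode ((lam / (2 * c)) ^ 2) (c ^ 2 * t ^ 2 - u ^ 2)
  rw [planarDensity, F_eq_powSeriesSum, funext (F_eq_powSeriesSum lam c u),
    (hasDerivAt_powSeriesSum_comp_sq hsum c u t).deriv,
    iteratedDeriv_two_powSeriesSum_comp_sq hsum]
  congr 1
  have hq : (lam / (2 * c)) ^ 2 * (4 * c ^ 2) = lam ^ 2 := by field_simp; ring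
  generalize (lam / (2 * c)) ^ 2 = q at hode hq ⊢
  generalize powSeriesSum (besselCoeff q) (c ^ 2 * t ^ 2 - u ^ 2) = G at hode ⊢
  generalize powSeriesSum (derivCoeff (besselCoeff q)) (c ^ 2 * t ^ 2 - u ^ 2) = G' at hode ⊢
  generalize powSeriesSum (derivCoeff (derivCoeff (besselCoeff q))) (c ^ 2 * t ^ 2 - u ^ 2) = G''
    at hode ⊢
  field_simp
  linear_combination (4 * c ^ 2) * hode + G * hq

end

theorem planarDensity_nonneg_general
    (lam c t : ℝ) (hlam : 0 < lam) (hc : 0 < c) :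
    ∀ u : ℝ, 0 ≤ u → u < c * t → 0 ≤ planarDensity lam c u t := by
  intro u hu hut
  have ht : 0 < t := pos_of_mul_pos_right (hu.trans_lt hut) hc.le
  have hA : 0 ≤ c ^ 2 * t ^ 2 - u ^ 2 := by nlinarith
  have hcoeff : ∀ k, 0 ≤ besselCoeff ((lam / (2 * c)) ^ 2) k := fun k => by
    unfold besselCoeff; positivity
  have hG' := powSeriesSum_nonneg (derivCoeff_nonneg hcoeff) hA
  have hG'' := powSeriesSum_nonneg (derivCoeff_nonneg (derivCoeff_nonneg hcoeff)) hA
  rw [planarDensity_eq_powSeriesSum hlam.ne' hc.ne']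
  positivity

theorem planarDensity_nonneg
    (lam c t : ℝ) (hlam : 0 < lam) (hc : 0 < c) (ht : 0 < t) :
    ∀ u : ℝ, 0 ≤ u → u < c * t → 0 ≤ planarDensity lam c u t :=
  planarDensity_nonneg_general lam c t hlam hc
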